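/- arXiv:1012.0425 — 7 statements merged into one kernel-verified Lean document; each statement's English description precedes it below -/
import Mathlib

section
/- Let Γ = (V,E) be a finite 3-regular simple graph equipped with a family of link operators K_e. Then a vector P ∈ (F₂ × F₂)^V satisfies ω(P, K_e) = 0 for every edge e ∈ E if and only if P = Σ_{e∈M} K_e for some cycle M ⊆ E. In particular, the set {P : ω(P,K_e) = 0 for all e ∈ E} is contained in the F₂-span of {K_e : e ∈ E}, i.e. the subsystem code whose gauge group is generated by the link operators has no logical qubits. -/
open Finset

/-- The symplectic form `ω` on Pauli operators modulo phase, modeled as vectors in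
`(F₂ × F₂)^V`. -/
def omegaForm {V : Type*} [Fintype V] (P Q : V → ZMod 2 × ZMod 2) : ZMod 2 :=
  ∑ u : V, ((P u).1 * (Q u).2 + (P u).2 * (Q u).1)

/-- The symplectic pairing on a single qubit. -/
def sp (a b : ZMod 2 × ZMod 2) : ZMod 2 := a.1 * b.2 + a.2 * b.1

/-- The three nonzero single-qubit Pauli operators. -/
def T : Finset (ZMod 2 × ZMod 2) := {(1,0),(0,1),(1,1)}

lemma sp_self : ∀ a : ZMod 2 × ZMod 2, sp a a = 0 := by decide
lemma sp_zero_right : ∀ a : ZMod 2 × ZMod 2, sp a 0 = 0 := by decide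
lemma mem_T : ∀ a : ZMod 2 × ZMod 2, a ≠ 0 → a ∈ T := by decide
lemma card_T : T.card = 3 := by decide
lemma sum_filter_T : ∀ a : ZMod 2 × ZMod 2,
    ∑ b ∈ T.filter (fun b => sp a b = 1), b = a := by decide
lemma even_card_filter_T : ∀ a : ZMod 2 × ZMod 2,
    Even ((T.filter (fun b => sp a b = 1)).card) := by decide
lemma zmod2_add_eq_zero : ∀ a b : ZMod 2, a + b = 0 → a = b := by decide
lemma cast_even_zmod2 {n : ℕ} (h : Even n) : (n : ZMod 2) = 0 := by
  obtain ⟨k, hk⟩ := h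
  subst hk; push_cast
  exact CharTwo.add_self_eq_zero _

lemma omega_eq_sum {V : Type*} [Fintype V] [DecidableEq V]
    (Q R : V → ZMod 2 × ZMod 2) (s : Finset V)
    (h : ∀ x ∉ s, sp (Q x) (R x) = 0) :
    omegaForm Q R = ∑ x ∈ s, sp (Q x) (R x) :=
  (Finset.sum_subset (Finset.subset_univ s) (fun x _ hx => h x hx)).symm

lemma omegaForm_sum_left {V : Type*} [Fintype V] {ι : Type*} (s : Finset ι)
    (f : ι → V → ZMod 2 × ZMod 2) (Q : V → ZMod 2 × ZMod 2) :
    omegaForm (∑ i ∈ s, f i) Q = ∑ i ∈ s, omegaForm (f i) Q := by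
  unfold omegaForm
  rw [Finset.sum_comm]
  refine Finset.sum_congr rfl fun u _ => ?_
  simp only [Finset.sum_apply, Prod.fst_sum, Prod.snd_sum, Finset.sum_mul,
    Finset.sum_add_distrib]

/-- Kitaev honeycomb-type model on a finite 3-regular simple graph `(V, E)` (edges
are 2-element subsets of `V`, each vertex lies in exactly 3 edges), with link
operators `K e` supported exactly on the endpoints of `e`, anticommuting iff the
two edges share exactly one endpoint.  Then a Pauli vector `P` commutes with every
link operator iff `P` is the sum of the link operators over some cycle `M ⊆ E`;
in particular the centralizer of the gauge group is contained in the `F₂`-span of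
the link operators, i.e. the subsystem code has no logical qubits. -/
theorem stmt1 {V : Type*} [Fintype V] [DecidableEq V]
    (E : Finset (Finset V))
    (hcard : ∀ e ∈ E, e.card = 2)
    (hreg : ∀ v : V, (E.filter (fun e => v ∈ e)).card = 3)
    (K : Finset V → V → ZMod 2 × ZMod 2)
    (hsupp : ∀ e ∈ E, ∀ u : V, K e u ≠ 0 ↔ u ∈ e)
    (hcomm : ∀ e ∈ E, ∀ e' ∈ E,
      omegaForm (K e) (K e') = if (e ∩ e').card = 1 then 1 else 0)
    (P : V → ZMod 2 × ZMod 2) :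
    ((∀ e ∈ E, omegaForm P (K e) = 0) ↔
      ∃ M ⊆ E, (∀ v : V, Even ((M.filter (fun e => v ∈ e)).card)) ∧
        P = ∑ e ∈ M, K e) ∧
    {Q : V → ZMod 2 × ZMod 2 | ∀ e ∈ E, omegaForm Q (K e) = 0} ⊆
      ↑(Submodule.span (ZMod 2) (K '' ↑E)) := by
  classical
  -- zero off support
  have hKz : ∀ e ∈ E, ∀ x, x ∉ e → K e x = 0 := by
    intro e he x hx
    by_contra h
    exact hx ((hsupp e he x).mp h)
  -- intersection of two distinct edges through a vertex is that vertex
  have hone : ∀ e ∈ E, ∀ e' ∈ E, e ≠ e' → ∀ v, v ∈ e → v ∈ e' → e ∩ e' = {v} := by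
    intro e he e' he' hne v hv hv'
    apply Finset.Subset.antisymm
    · intro x hx
      rw [Finset.mem_inter] at hx
      rw [Finset.mem_singleton]
      by_contra hxv
      have hsub : ∀ f ∈ E, x ∈ f → v ∈ f → ({x, v} : Finset V) = f := by
        intro f hf hxf hvf
        refine Finset.eq_of_subset_of_card_le ?_ ?_
        · intro y hy
          rcases Finset.mem_insert.mp hy with rfl | hy
          · exact hxf
          · rw [Finset.mem_singleton] at hy; subst hy; exact hvf
        · rw [hcard f hf, Finset.card_pair hxv]
      exact hne ((hsub e he hx.1 hv).symm.trans (hsub e' he' hx.2 hv'))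
    · intro x hx
      rw [Finset.mem_singleton] at hx; subst hx
      exact Finset.mem_inter.mpr ⟨hv, hv'⟩
  -- injectivity of e ↦ K e v on edges through v
  have hinj : ∀ v : V, ∀ e ∈ E, ∀ e' ∈ E, v ∈ e → v ∈ e' → e ≠ e' →
      K e v ≠ K e' v := by
    intro v e he e' he' hv hv' hne heq
    have hint := hone e he e' he' hne v hv hv'
    have h1 : omegaForm (K e) (K e') = 1 := by
      rw [hcomm e he e' he', hint]; simp
    have hvan : ∀ x ∉ ({v} : Finset V), sp (K e x) (K e' x) = 0 := by
      intro x hx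
      rw [Finset.mem_singleton] at hx
      by_cases hxe : x ∈ e
      · by_cases hxe' : x ∈ e'
        · exact absurd (Finset.mem_singleton.mp
            (hint ▸ Finset.mem_inter.mpr ⟨hxe, hxe'⟩)) hx
        · rw [hKz e' he' x hxe', sp_zero_right]
      · rw [hKz e he x hxe]; simp [sp]
    have h2 : omegaForm (K e) (K e') = sp (K e v) (K e' v) := by
      rw [omega_eq_sum (K e) (K e') {v} hvan, Finset.sum_singleton]
    rw [h2, heq, sp_self] at h1
    exact absurd h1 (by decide)
  -- the image of the three edges through v is exactly T
  have himage : ∀ v : V, (E.filter (fun e => v ∈ e)).image (fun e => K e v) = T := by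
    intro v
    have hsub : (E.filter (fun e => v ∈ e)).image (fun e => K e v) ⊆ T := by
      intro b hb
      obtain ⟨e, he, rfl⟩ := Finset.mem_image.mp hb
      rw [Finset.mem_filter] at he
      exact mem_T _ ((hsupp e he.1 v).mpr he.2)
    have hinjOn : ∀ e ∈ E.filter (fun e => v ∈ e), ∀ e' ∈ E.filter (fun e => v ∈ e),
        K e v = K e' v → e = e' := by
      intro e he e' he' heq
      rw [Finset.mem_filter] at he he'
      by_contra hne
      exact hinj v e he.1 e' he'.1 he.2 he'.2 hne heq
    have hc : ((E.filter (fun e => v ∈ e)).image (fun e => K e v)).card = 3 := by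
      rw [Finset.card_image_of_injOn (fun e he e' he' => hinjOn e he e' he'), hreg v]
    exact Finset.eq_of_subset_of_card_le hsub (by rw [hc, card_T])
  -- injectivity on any subset of edges through v
  have hinjOn : ∀ (v : V) (s : Finset (Finset V)), s ⊆ E.filter (fun e => v ∈ e) →
      ∀ e ∈ s, ∀ e' ∈ s, K e v = K e' v → e = e' := by
    intro v s hs e he e' he' heq
    have h1 := Finset.mem_filter.mp (hs he)
    have h2 := Finset.mem_filter.mp (hs he')
    by_contra hne
    exact hinj v e h1.1 e' h2.1 h1.2 h2.2 hne heq
  -- key pointwise sums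
  have hsum : ∀ (v : V) (a : ZMod 2 × ZMod 2),
      ∑ e ∈ (E.filter (fun e => v ∈ e)).filter (fun e => sp a (K e v) = 1), K e v
        = a := by
    intro v a
    have key := sum_filter_T a
    rw [← himage v, Finset.filter_image,
      Finset.sum_image (hinjOn v _ (Finset.filter_subset _ _))] at key
    exact key
  have heven : ∀ (v : V) (a : ZMod 2 × ZMod 2),
      Even (((E.filter (fun e => v ∈ e)).filter (fun e => sp a (K e v) = 1)).card) := by
    intro v a
    have key := even_card_filter_T a
    rw [← himage v, Finset.filter_image,
      Finset.card_image_of_injOn (fun e he e' he' =>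
        hinjOn v _ (Finset.filter_subset _ _) e he e' he')] at key
    exact key
  -- forward direction
  have hfwd : ∀ Q : V → ZMod 2 × ZMod 2, (∀ e ∈ E, omegaForm Q (K e) = 0) →
      ∃ M ⊆ E, (∀ v : V, Even ((M.filter (fun e => v ∈ e)).card)) ∧
        Q = ∑ e ∈ M, K e := by
    intro Q hP
    -- value of sp (Q ·) (K e ·) is the same at both endpoints
    have hconst : ∀ e ∈ E, ∀ u ∈ e, ∀ w ∈ e, sp (Q u) (K e u) = sp (Q w) (K e w) := by
      intro e he u hu w hw
      rcases em (u = w) with rfl | hne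
      · rfl
      · have hew : e = {u, w} := by
          refine (Finset.eq_of_subset_of_card_le ?_ ?_).symm
          · intro y hy
            rcases Finset.mem_insert.mp hy with rfl | hy
            · exact hu
            · rw [Finset.mem_singleton] at hy; subst hy; exact hw
          · rw [hcard e he, Finset.card_pair hne]
        subst hew
        have h0 := hP _ he
        rw [omega_eq_sum Q (K _) _ (fun x hx => by rw [hKz _ he x hx, sp_zero_right]),
          Finset.sum_pair hne] at h0
        exact zmod2_add_eq_zero _ _ h0
    set M := E.filter (fun e => ∃ u ∈ e, sp (Q u) (K e u) = 1) with hMdef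
    have hMmem : ∀ e ∈ E, ∀ v ∈ e, (e ∈ M ↔ sp (Q v) (K e v) = 1) := by
      intro e he v hv
      constructor
      · intro hM
        obtain ⟨u, hu, hsp⟩ := (Finset.mem_filter.mp hM).2
        rw [← hconst e he u hu v hv]; exact hsp
      · intro hsp
        exact Finset.mem_filter.mpr ⟨he, v, hv, hsp⟩
    have hMfilter : ∀ v : V, M.filter (fun e => v ∈ e)
        = (E.filter (fun e => v ∈ e)).filter (fun e => sp (Q v) (K e v) = 1) := by
      intro v
      ext e
      simp only [Finset.mem_filter]
      constructor
      · rintro ⟨hM, hv⟩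
        have he := (Finset.mem_filter.mp hM).1
        exact ⟨⟨he, hv⟩, (hMmem e he v hv).mp hM⟩
      · rintro ⟨⟨he, hv⟩, hsp⟩
        exact ⟨(hMmem e he v hv).mpr hsp, hv⟩
    refine ⟨M, Finset.filter_subset _ _, ?_, ?_⟩
    · intro v
      rw [hMfilter v]
      exact heven v (Q v)
    · funext v
      rw [Finset.sum_apply]
      have hMsub : M ⊆ E := Finset.filter_subset _ _
      rw [← Finset.sum_subset (Finset.filter_subset (fun e => v ∈ e) M)
        (fun e he hv => hKz e (hMsub he) v (by
          intro hmem
          exact hv (Finset.mem_filter.mpr ⟨he, hmem⟩)))]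
      rw [hMfilter v, hsum v (Q v)]
  -- backward direction
  have hbwd : ∀ (Q : V → ZMod 2 × ZMod 2), ∀ M ⊆ E,
      (∀ v : V, Even ((M.filter (fun e => v ∈ e)).card)) →
      Q = ∑ e ∈ M, K e → ∀ e ∈ E, omegaForm Q (K e) = 0 := by
    intro Q M hME hcyc hQ e' he'
    obtain ⟨u, w, huw, hew⟩ :
        ∃ u w, u ≠ w ∧ e' = {u, w} := by
      obtain ⟨u, w, h1, h2⟩ := Finset.card_eq_two.mp (hcard e' he')
      exact ⟨u, w, h1, h2⟩
    subst hQ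
    rw [omegaForm_sum_left]
    have hterm : ∀ e ∈ M, omegaForm (K e) (K e')
        = (if u ∈ e then (1 : ZMod 2) else 0) + (if w ∈ e then (1 : ZMod 2) else 0) := by
      intro e heM
      have he := hME heM
      rw [hcomm e he e' he']
      by_cases hu : u ∈ e <;> by_cases hw : w ∈ e
      · -- both endpoints in e, so e = e'
        have heq : e = e' := by
          rw [hew]
          refine (Finset.eq_of_subset_of_card_le ?_ ?_).symm
          · intro y hy
            rcases Finset.mem_insert.mp hy with rfl | hy
            · exact hu
            · rw [Finset.mem_singleton] at hy; subst hy; exact hw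
          · rw [hcard e he, Finset.card_pair huw]
        have hu' : u ∈ e' := heq ▸ hu
        have hw' : w ∈ e' := heq ▸ hw
        rw [heq, Finset.inter_self, hcard e' he']
        simp only [hu', hw', if_true, if_pos]
        decide
      · have hint : e ∩ e' = {u} := by
          apply Finset.Subset.antisymm
          · intro x hx
            rw [Finset.mem_inter, hew, Finset.mem_insert, Finset.mem_singleton] at hx
            rw [Finset.mem_singleton]
            rcases hx.2 with rfl | rfl
            · rfl
            · exact absurd hx.1 hw
          · intro x hx
            rw [Finset.mem_singleton] at hx; subst hx
            exact Finset.mem_inter.mpr ⟨hu, by rw [hew]; exact Finset.mem_insert_self _ _⟩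
        rw [hint, Finset.card_singleton]
        simp [hu, hw]
      · have hint : e ∩ e' = {w} := by
          apply Finset.Subset.antisymm
          · intro x hx
            rw [Finset.mem_inter, hew, Finset.mem_insert, Finset.mem_singleton] at hx
            rw [Finset.mem_singleton]
            rcases hx.2 with rfl | rfl
            · exact absurd hx.1 hu
            · rfl
          · intro x hx
            rw [Finset.mem_singleton] at hx; subst hx
            exact Finset.mem_inter.mpr ⟨hw, by
              rw [hew]; exact Finset.mem_insert.mpr (Or.inr (Finset.mem_singleton_self _))⟩
        rw [hint, Finset.card_singleton]
        simp [hu, hw]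
      · have hint : e ∩ e' = ∅ := by
          apply Finset.eq_empty_of_forall_notMem
          intro x hx
          rw [Finset.mem_inter, hew, Finset.mem_insert, Finset.mem_singleton] at hx
          rcases hx.2 with rfl | rfl
          · exact hu hx.1
          · exact hw hx.1
        rw [hint, Finset.card_empty]
        simp [hu, hw]
    rw [Finset.sum_congr rfl hterm, Finset.sum_add_distrib, Finset.sum_boole,
      Finset.sum_boole, cast_even_zmod2 (hcyc u), cast_even_zmod2 (hcyc w), add_zero]
  constructor
  · exact ⟨hfwd P, fun ⟨M, hME, hcyc, hQ⟩ => hbwd P M hME hcyc hQ⟩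
  · intro Q hQ
    obtain ⟨M, hME, _, hQeq⟩ := hfwd Q hQ
    rw [hQeq]
    exact Submodule.sum_mem _ (fun e he => Submodule.subset_span
      ⟨e, Finset.mem_coe.mpr (hME he), rfl⟩)
end

section
/- Let Γ = (V,E) be a finite 3-regular simple graph equipped with a family of link operators K_e. Then Σ_{e∈E} K_e = 0 in (F₂ × F₂)^V. (This is the identity that the product of all link operators of the honeycomb-type model is proportional to the identity operator.) -/
/-!
Fix a vertex `v`. Only the three edges at `v` contribute to the sum at `v`, and each
contributes a nonzero element of `F₂ × F₂`. These three values are pairwise distinct: two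
distinct edges at `v` meet only in `v`, so their link operators anticommute, whereas equal
values at `v` would make the symplectic pairing vanish (`⟨a, a⟩ = 2 a₁ a₂ = 0`). The three
nonzero elements of `F₂ × F₂` sum to zero.
-/

open Finset

theorem ZMod.two_prod_add_add_eq_zero {a b c : ZMod 2 × ZMod 2} (ha : a ≠ 0) (hb : b ≠ 0)
    (hc : c ≠ 0) (hab : a ≠ b) (hac : a ≠ c) (hbc : b ≠ c) : a + b + c = 0 := by
  revert a b c
  decide

theorem omegaForm_eq_zero_of_eq_of_forall_ne {V : Type*} [Fintype V]
    {P Q : V → ZMod 2 × ZMod 2} (v : V) (hPQ : P v = Q v)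
    (hdisj : ∀ u ≠ v, P u = 0 ∨ Q u = 0) : omegaForm P Q = 0 := by
  rw [omegaForm, Finset.sum_eq_single v (fun u _ hu => ?_) (by simp), hPQ]
  · rw [mul_comm]; exact CharTwo.add_self_eq_zero _
  · rcases hdisj u hu with h | h <;> simp [h]

theorem Finset.inter_eq_singleton_of_card_eq_two {α : Type*} [DecidableEq α]
    {s t : Finset α} {a : α} (hs : s.card = 2) (ht : t.card = 2) (hst : s ≠ t)
    (has : a ∈ s) (hat : a ∈ t) : s ∩ t = {a} := by
  have hlt : (s ∩ t).card < s.card := by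
    refine card_lt_card ⟨inter_subset_left, fun hsub => hst ?_⟩
    exact eq_of_subset_of_card_le (subset_inter_iff.mp hsub).2 (by rw [hs, ht])
  exact (eq_of_subset_of_card_le (singleton_subset_iff.mpr (mem_inter.mpr ⟨has, hat⟩))
    (by rw [card_singleton]; omega)).symm

section LinkOperators

variable {V : Type*} [Fintype V] [DecidableEq V] {E : Finset (Finset V)}
  {K : Finset V → V → ZMod 2 × ZMod 2}

theorem linkOperator_apply_ne (hcard : ∀ e ∈ E, e.card = 2)
    (hsupp : ∀ e ∈ E, ∀ u : V, K e u ≠ 0 ↔ u ∈ e)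
    (hcomm : ∀ e ∈ E, ∀ e' ∈ E,
      omegaForm (K e) (K e') = if (e ∩ e').card = 1 then 1 else 0)
    {v : V} {e e' : Finset V} (he : e ∈ E) (he' : e' ∈ E) (hve : v ∈ e) (hve' : v ∈ e')
    (hne : e ≠ e') : K e v ≠ K e' v := by
  intro heq
  have hinter := inter_eq_singleton_of_card_eq_two (hcard e he) (hcard e' he') hne hve hve'
  have hcommute : omegaForm (K e) (K e') = 0 := by
    refine omegaForm_eq_zero_of_eq_of_forall_ne v heq fun u hu => ?_
    by_contra! h
    have : u ∈ e ∩ e' := mem_inter.mpr ⟨(hsupp e he u).mp h.1, (hsupp e' he' u).mp h.2⟩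
    exact hu (by simpa [hinter] using this)
  simp [hcomm e he e' he', hinter] at hcommute

end LinkOperators

/-- For a family of link operators on a finite 3-regular simple graph `(V, E)`
(edges are 2-element subsets of `V`, each vertex lies in exactly 3 edges; link
operators are supported exactly on the endpoints of their edge and anticommute iff
the two edges share exactly one endpoint), the sum of all link operators vanishes:
the product of all link operators of the honeycomb-type model is proportional to
the identity operator. -/
theorem stmt2 {V : Type*} [Fintype V] [DecidableEq V]
    (E : Finset (Finset V))
    (hcard : ∀ e ∈ E, e.card = 2)
    (hreg : ∀ v : V, (E.filter (fun e => v ∈ e)).card = 3)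
    (K : Finset V → V → ZMod 2 × ZMod 2)
    (hsupp : ∀ e ∈ E, ∀ u : V, K e u ≠ 0 ↔ u ∈ e)
    (hcomm : ∀ e ∈ E, ∀ e' ∈ E,
      omegaForm (K e) (K e') = if (e ∩ e').card = 1 then 1 else 0) :
    ∑ e ∈ E, K e = 0 := by
  funext v
  rw [Finset.sum_apply, Pi.zero_apply,
    ← sum_filter_of_ne fun e he hne => (hsupp e he v).mp hne]
  obtain ⟨a, b, c, hab, hac, hbc, habc⟩ := card_eq_three.mp (hreg v)
  have hmem : ∀ e ∈ ({a, b, c} : Finset (Finset V)), e ∈ E ∧ v ∈ e := fun e he =>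
    mem_filter.mp (habc ▸ he)
  obtain ⟨ha, hva⟩ := hmem a (by simp)
  obtain ⟨hb, hvb⟩ := hmem b (by simp)
  obtain ⟨hc, hvc⟩ := hmem c (by simp)
  have hne : ∀ {e e'}, e ∈ E → e' ∈ E → v ∈ e → v ∈ e' → e ≠ e' → K e v ≠ K e' v :=
    linkOperator_apply_ne hcard hsupp hcomm
  rw [habc, sum_insert (by simp [hab, hac]), sum_pair hbc, ← add_assoc]
  exact ZMod.two_prod_add_add_eq_zero ((hsupp a ha v).mpr hva) ((hsupp b hb v).mpr hvb)
    ((hsupp c hc v).mpr hvc) (hne ha hb hva hvb hab) (hne ha hc hva hvc hac)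
    (hne hb hc hvb hvc hbc)
end

section
/- Let ℒ = (V,E) be a 3-valent hypergraph equipped with a family of edge operators K_e, let e ∈ E be any edge and M ⊆ E any cycle. Then the loop operator W(M) = Σ_{e'∈M} K_{e'} satisfies: ω(K_e, W(M)) = 1 if e is a triangle and e ∈ M, and ω(K_e, W(M)) = 0 otherwise. (That is, the loop operator W(M) anticommutes with the edge operator K_e exactly when e is a triangle contained in M.) -/
open Finset

/-- Let `(V, E)` be a finite 3-valent hypergraph: every edge is a subset of `V`
of size 2 (a link) or size 3 (a triangle), every vertex belongs to exactly three
edges, two distinct edges share at most one vertex, and distinct triangles are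
disjoint.  Let `K` be a family of edge operators: `K e` is supported exactly on
the vertices of `e`, and two distinct edge operators anticommute iff their edges
share exactly one vertex.  Then for any edge `e ∈ E` and any cycle `M ⊆ E`, the
loop operator `W(M) = ∑_{e' ∈ M} K e'` anticommutes with `K e` iff `e` is a
triangle contained in `M`. -/
theorem stmt5 {V : Type*} [Fintype V] [DecidableEq V]
    (E : Finset (Finset V))
    (hcard : ∀ e ∈ E, e.card = 2 ∨ e.card = 3)
    (hreg : ∀ v : V, (E.filter (fun e => v ∈ e)).card = 3)
    (hint : ∀ e ∈ E, ∀ e' ∈ E, e ≠ e' → (e ∩ e').card ≤ 1)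
    (htri : ∀ e ∈ E, ∀ e' ∈ E, e ≠ e' → e.card = 3 → e'.card = 3 → e ∩ e' = ∅)
    (K : Finset V → V → ZMod 2 × ZMod 2)
    (hsupp : ∀ e ∈ E, ∀ u : V, K e u ≠ 0 ↔ u ∈ e)
    (hKcomm : ∀ e ∈ E, ∀ e' ∈ E, e ≠ e' →
      omegaForm (K e) (K e') = if (e ∩ e').card = 1 then 1 else 0)
    (e : Finset V) (he : e ∈ E)
    (M : Finset (Finset V)) (hME : M ⊆ E)
    (hcyc : ∀ v : V, Even ((M.filter (fun e' => v ∈ e')).card)) :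
    omegaForm (K e) (∑ e' ∈ M, K e') =
      if e.card = 3 ∧ e ∈ M then 1 else 0 := by
  -- linearity of omegaForm in second argument
  have hlin : omegaForm (K e) (∑ e' ∈ M, K e') = ∑ e' ∈ M, omegaForm (K e) (K e') := by
    simp only [omegaForm, Finset.sum_apply, Prod.fst_sum, Prod.snd_sum, Finset.mul_sum,
      ← Finset.sum_add_distrib]
    rw [Finset.sum_comm]
  have hself : omegaForm (K e) (K e) = 0 := by
    unfold omegaForm
    apply Finset.sum_eq_zero
    intro u _
    rw [mul_comm]
    exact CharTwo.add_self_eq_zero _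
  -- double counting
  have hdc : ∑ v ∈ e, ((M.filter (fun e' => v ∈ e')).card : ℕ)
      = ∑ e' ∈ M, (e ∩ e').card := by
    simp only [Finset.card_filter]
    rw [Finset.sum_comm]
    refine Finset.sum_congr rfl fun e' _ => ?_
    rw [← Finset.card_filter, Finset.filter_mem_eq_inter]
  have hA : ((∑ e' ∈ M, (e ∩ e').card : ℕ) : ZMod 2) = 0 := by
    rw [← hdc, Nat.cast_sum]
    apply Finset.sum_eq_zero
    intro v _
    have := hcyc v
    rw [Nat.even_iff] at this
    rw [(ZMod.natCast_eq_zero_iff _ 2), Nat.dvd_iff_mod_eq_zero]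
    exact this
  -- termwise identity
  have hterm : ∀ e' ∈ M, omegaForm (K e) (K e')
      = ((e ∩ e').card : ZMod 2) + (if e' = e then (if e.card = 3 then 1 else 0) else 0) := by
    intro e' hM
    by_cases h : e' = e
    · subst h
      rw [hself, if_pos rfl, Finset.inter_self]
      rcases hcard e' he with h2 | h3
      · rw [h2, if_neg (by omega)]; decide
      · rw [h3, if_pos rfl]; decide
    · rw [hKcomm e he e' (hME hM) (Ne.symm h), if_neg h, add_zero]
      have hle := hint e he e' (hME hM) (Ne.symm h)
      interval_cases hc : (e ∩ e').card
      · simp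
      · simp
  calc omegaForm (K e) (∑ e' ∈ M, K e')
      = ∑ e' ∈ M, omegaForm (K e) (K e') := hlin
    _ = ∑ e' ∈ M, (((e ∩ e').card : ZMod 2)
          + (if e' = e then (if e.card = 3 then 1 else 0) else 0)) :=
        Finset.sum_congr rfl hterm
    _ = (if e.card = 3 ∧ e ∈ M then 1 else 0) := by
        rw [Finset.sum_add_distrib, ← Nat.cast_sum, hA, zero_add,
          Finset.sum_ite_eq' M e (fun _ => if e.card = 3 then 1 else 0)]
        by_cases h1 : e ∈ M <;> by_cases h2 : e.card = 3 <;> simp [h1, h2]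
end

section
/- Let ℒ = (V,E) be a 3-valent hypergraph equipped with a family of edge operators K_e, and let M, M' ⊆ E be any two cycles. Then ω(W(M), W(M')) ≡ Δ(M,M') (mod 2), where Δ(M,M') is the number of triangles contained in both M and M'. (That is, the loop operators W(M) and W(M') anticommute iff the cycles M and M' share an odd number of triangles.) -/
open Finset

/-- Let `(V, E)` be a finite 3-valent hypergraph: every edge is a subset of `V`
of size 2 (a link) or size 3 (a triangle), every vertex belongs to exactly three
edges, two distinct edges share at most one vertex, and distinct triangles are
disjoint.  Let `K` be a family of edge operators: `K e` is supported exactly on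
the vertices of `e`, and two distinct edge operators anticommute iff their edges
share exactly one vertex.  Then for any two cycles `M, M' ⊆ E`, the loop
operators `W(M) = ∑_{e ∈ M} K e` and `W(M') = ∑_{e ∈ M'} K e` satisfy
`ω(W(M), W(M')) ≡ Δ(M,M') (mod 2)`, where `Δ(M,M')` is the number of triangles
contained in both `M` and `M'`. -/
theorem stmt6 {V : Type*} [Fintype V] [DecidableEq V]
    (E : Finset (Finset V))
    (hcard : ∀ e ∈ E, e.card = 2 ∨ e.card = 3)
    (hreg : ∀ v : V, (E.filter (fun e => v ∈ e)).card = 3)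
    (hint : ∀ e ∈ E, ∀ e' ∈ E, e ≠ e' → (e ∩ e').card ≤ 1)
    (htri : ∀ e ∈ E, ∀ e' ∈ E, e ≠ e' → e.card = 3 → e'.card = 3 → e ∩ e' = ∅)
    (K : Finset V → V → ZMod 2 × ZMod 2)
    (hsupp : ∀ e ∈ E, ∀ u : V, K e u ≠ 0 ↔ u ∈ e)
    (hKcomm : ∀ e ∈ E, ∀ e' ∈ E, e ≠ e' →
      omegaForm (K e) (K e') = if (e ∩ e').card = 1 then 1 else 0)
    (M : Finset (Finset V)) (hME : M ⊆ E)
    (hcyc : ∀ v : V, Even ((M.filter (fun e => v ∈ e)).card))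
    (M' : Finset (Finset V)) (hM'E : M' ⊆ E)
    (hcyc' : ∀ v : V, Even ((M'.filter (fun e => v ∈ e)).card)) :
    omegaForm (∑ e ∈ M, K e) (∑ e ∈ M', K e) =
      ((((M ∩ M').filter (fun e => e.card = 3)).card : ℕ) : ZMod 2) := by
  classical
  -- bilinearity
  have hbil : omegaForm (∑ e ∈ M, K e) (∑ e ∈ M', K e)
      = ∑ e ∈ M, ∑ e' ∈ M', omegaForm (K e) (K e') := by
    simp only [omegaForm, Finset.sum_apply, Prod.fst_sum, Prod.snd_sum,
      Finset.sum_mul_sum, ← Finset.sum_add_distrib]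
    rw [Finset.sum_comm]
    refine Finset.sum_congr rfl fun e _ => ?_
    rw [Finset.sum_comm]
  -- diagonal vanishes
  have hdiag : ∀ e, omegaForm (K e) (K e) = 0 := by
    intro e
    refine Finset.sum_eq_zero fun u _ => ?_
    rw [mul_comm ((K e u).2)]
    exact CharTwo.add_self_eq_zero _
  -- pointwise identity
  have hterm : ∀ e ∈ E, ∀ e' ∈ E, omegaForm (K e) (K e') =
      (((e ∩ e').card : ℕ) : ZMod 2) + (if e = e' ∧ e.card = 3 then 1 else 0) := by
    intro e he e' he'
    by_cases h : e = e'
    · subst h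
      rw [hdiag e, Finset.inter_self]
      rcases hcard e he with h2 | h3
      · simp [h2]
        decide
      · simp only [h3, and_self, if_pos (And.intro rfl rfl)]
        simp [h3]
        decide
    · rw [hKcomm e he e' he' h]
      have hle := hint e he e' he' h
      rcases Nat.le_one_iff_eq_zero_or_eq_one.mp hle with h0 | h0 <;> simp [h0, h]
  -- counting lemma
  have hNcard : ∀ e e' : Finset V, (e ∩ e').card
      = ∑ v : V, if v ∈ e ∧ v ∈ e' then 1 else 0 := by
    intro e e'
    have he : e ∩ e' = Finset.univ.filter (fun v => v ∈ e ∧ v ∈ e') := by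
      ext v; simp
    rw [he, Finset.card_filter]
  -- the full nat double sum of intersection sizes is even
  have hNeven : (2 : ℕ) ∣ ∑ e ∈ M, ∑ e' ∈ M', (e ∩ e').card := by
    have hre : ∑ e ∈ M, ∑ e' ∈ M', (e ∩ e').card
        = ∑ v : V, (M.filter (fun e => v ∈ e)).card * (M'.filter (fun e => v ∈ e)).card := by
      simp only [hNcard]
      rw [show (∑ e ∈ M, ∑ e' ∈ M', ∑ v : V, if v ∈ e ∧ v ∈ e' then 1 else 0)
          = ∑ e ∈ M, ∑ v : V, ∑ e' ∈ M', (if v ∈ e ∧ v ∈ e' then 1 else 0) from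
        Finset.sum_congr rfl fun e _ => Finset.sum_comm, Finset.sum_comm]
      refine Finset.sum_congr rfl fun v _ => ?_
      rw [Finset.card_filter, Finset.card_filter, Finset.sum_mul_sum]
      refine Finset.sum_congr rfl fun e _ => Finset.sum_congr rfl fun e' _ => ?_
      by_cases h1 : v ∈ e <;> by_cases h2 : v ∈ e' <;> simp [h1, h2]
    rw [hre]
    refine Finset.dvd_sum fun v _ => Dvd.dvd.mul_right ?_ _
    exact (hcyc v).two_dvd
  rw [hbil, Finset.sum_congr rfl fun e he =>
    Finset.sum_congr rfl fun e' he' => hterm e (hME he) e' (hM'E he')]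
  simp only [Finset.sum_add_distrib]
  have h1 : ∑ e ∈ M, ∑ e' ∈ M', (((e ∩ e').card : ℕ) : ZMod 2) = 0 := by
    have : ∑ e ∈ M, ∑ e' ∈ M', (((e ∩ e').card : ℕ) : ZMod 2)
        = ((∑ e ∈ M, ∑ e' ∈ M', (e ∩ e').card : ℕ) : ZMod 2) := by push_cast; rfl
    rw [this, ZMod.natCast_eq_zero_iff]
    exact hNeven
  have h2 : ∑ e ∈ M, ∑ e' ∈ M', (if e = e' ∧ e.card = 3 then (1 : ZMod 2) else 0)
      = ((((M ∩ M').filter (fun e => e.card = 3)).card : ℕ) : ZMod 2) := by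
    have inner : ∀ e ∈ M, ∑ e' ∈ M', (if e = e' ∧ e.card = 3 then (1 : ZMod 2) else 0)
        = if e ∈ M' ∧ e.card = 3 then 1 else 0 := by
      intro e _
      by_cases h3 : e.card = 3
      · simp only [h3, and_true]
        exact Finset.sum_ite_eq M' e (fun _ => 1)
      · simp [h3]
    rw [Finset.sum_congr rfl inner, Finset.sum_boole]
    have : M.filter (fun e => e ∈ M' ∧ e.card = 3) = (M ∩ M').filter (fun e => e.card = 3) := by
      ext e; simp [Finset.mem_filter, Finset.mem_inter, and_assoc]
    rw [this]
  rw [h1, h2, zero_add]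
end

section
/- Let ℒ = (V,E) be a 3-valent hypergraph equipped with a family of edge operators K_e whose triangle operators are all of Z-type, and form the derived solid and dashed link operators K'. If a vector P ∈ (F₂ × F₂)^V satisfies ω(P, K') = 0 for every solid link operator and every dashed link operator K', then P = Σ_{e∈M} K_e for some cycle M ⊆ E. Combined with the converse inclusion, this shows that the centralizer of the gauge group generated by the two-qubit link operators is exactly the group of loop operators. -/
/-!
Commuting with the solid and dashed link operators means that along every edge `e` the
Pauli `P` anticommutes with `K e` either on all qubits of `e` or on none; let `M` be the set of
edges of the first kind. At a qubit `v` the three edge operators through `v` pairwise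
anticommute there, so their values at `v` are `X`, `Y`, `Z` in some order. On one qubit every
Pauli anticommutes with an even number of `X, Y, Z` and is the product of exactly those; this
gives the cycle condition for `M` and `P = W(M)`, qubit by qubit.
-/

open Finset

/-- The dashed link operator associated to a pair of vertices `u, v` of a triangle:
it equals `(0,1)` (a Pauli `Z`) at `u` and at `v` and vanishes elsewhere. -/
def dashedOp {V : Type*} [DecidableEq V] (u v : V) : V → ZMod 2 × ZMod 2 :=
  fun w => if w = u ∨ w = v then ((0 : ZMod 2), (1 : ZMod 2)) else 0

def qubitForm (x y : ZMod 2 × ZMod 2) : ZMod 2 := x.1 * y.2 + x.2 * y.1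

lemma qubitForm_self : ∀ x : ZMod 2 × ZMod 2, qubitForm x x = 0 := by decide

lemma qubitForm_zero_right : ∀ x : ZMod 2 × ZMod 2, qubitForm x 0 = 0 := by decide

lemma qubitForm_zero_left : ∀ x : ZMod 2 × ZMod 2, qubitForm 0 x = 0 := by decide

/-- `univ.erase 0` is the set `{X, Y, Z}` of non-identity Paulis on one qubit. -/
lemma even_card_filter_qubitForm_eq_one :
    ∀ x : ZMod 2 × ZMod 2, Even ((univ.erase 0).filter (qubitForm x · = 1)).card := by
  decide

lemma sum_filter_qubitForm_eq_one :
    ∀ x : ZMod 2 × ZMod 2, ∑ y ∈ (univ.erase 0).filter (qubitForm x · = 1), y = x := by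
  decide

section Operators

variable {V : Type*} [Fintype V]

lemma omegaForm_eq_sum_of_support {P Q : V → ZMod 2 × ZMod 2} (s : Finset V)
    (h : ∀ u ∉ s, qubitForm (P u) (Q u) = 0) :
    omegaForm P Q = ∑ u ∈ s, qubitForm (P u) (Q u) :=
  (sum_subset (subset_univ s) fun u _ hu => h u hu).symm

variable [DecidableEq V]

lemma apply_ne_apply_of_omegaForm_eq_one {Q Q' : V → ZMod 2 × ZMod 2} {e e' : Finset V}
    {v : V} (hQ : ∀ u ∉ e, Q u = 0) (hQ' : ∀ u ∉ e', Q' u = 0) (hinter : e ∩ e' = {v})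
    (h : omegaForm Q Q' = 1) : Q v ≠ Q' v := by
  intro heq
  have hoff : ∀ u ∉ ({v} : Finset V), qubitForm (Q u) (Q' u) = 0 := by
    intro u hu
    by_cases hue : u ∈ e
    · have hue' : u ∉ e' := fun hue' => hu (hinter ▸ mem_inter.2 ⟨hue, hue'⟩)
      rw [hQ' u hue', qubitForm_zero_right]
    · rw [hQ u hue, qubitForm_zero_left]
  rw [omegaForm_eq_sum_of_support _ hoff, sum_singleton, heq, qubitForm_self] at h
  exact zero_ne_one h

lemma injOn_apply_of_omegaForm_edges {E : Finset (Finset V)}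
    (hint : ∀ e ∈ E, ∀ e' ∈ E, e ≠ e' → (e ∩ e').card ≤ 1) {K : Finset V → V → ZMod 2 × ZMod 2}
    (hK : ∀ e ∈ E, ∀ u ∉ e, K e u = 0)
    (hKcomm : ∀ e ∈ E, ∀ e' ∈ E, e ≠ e' →
      omegaForm (K e) (K e') = if (e ∩ e').card = 1 then 1 else 0) (v : V) :
    Set.InjOn (K · v) (E.filter (fun e => v ∈ e)) := by
  intro e he e' he' heq
  rw [mem_coe, mem_filter] at he he'
  by_contra hne
  have hinter : e ∩ e' = {v} := eq_singleton_iff_unique_mem.2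
    ⟨mem_inter.2 ⟨he.2, he'.2⟩, fun w hw =>
      card_le_one.1 (hint e he.1 e' he'.1 hne) w hw v (mem_inter.2 ⟨he.2, he'.2⟩)⟩
  have hanti := hKcomm e he.1 e' he'.1 hne
  rw [hinter, card_singleton, if_pos rfl] at hanti
  exact apply_ne_apply_of_omegaForm_eq_one (hK e he.1) (hK e' he'.1) hinter hanti heq

lemma qubitForm_eq_of_omegaForm_eq_zero {P Q : V → ZMod 2 × ZMod 2} {u v : V} (huv : u ≠ v)
    (hQ : ∀ w, w ≠ u → w ≠ v → Q w = 0) (h : omegaForm P Q = 0) :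
    qubitForm (P u) (Q u) = qubitForm (P v) (Q v) := by
  have hoff : ∀ w ∉ ({u, v} : Finset V), qubitForm (P w) (Q w) = 0 := by
    intro w hw
    simp only [mem_insert, mem_singleton, not_or] at hw
    rw [hQ w hw.1 hw.2, qubitForm_zero_right]
  rw [omegaForm_eq_sum_of_support _ hoff, sum_pair huv] at h
  exact CharTwo.add_eq_zero.1 h

lemma qubitForm_eq_of_mem_link {P Q : V → ZMod 2 × ZMod 2} {e : Finset V} (he : e.card = 2)
    (hQ : ∀ w ∉ e, Q w = 0) (h : omegaForm P Q = 0) {u v : V} (hu : u ∈ e) (hv : v ∈ e) :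
    qubitForm (P u) (Q u) = qubitForm (P v) (Q v) := by
  obtain rfl | huv := eq_or_ne u v
  · rfl
  have hpair : ({u, v} : Finset V) = e :=
    eq_of_subset_of_card_le (insert_subset hu (singleton_subset_iff.2 hv))
      (by rw [he, card_pair huv])
  refine qubitForm_eq_of_omegaForm_eq_zero huv (fun w hwu hwv => hQ w ?_) h
  simp [← hpair, hwu, hwv]

lemma qubitForm_eq_of_omegaForm_dashedOp_eq_zero {P : V → ZMod 2 × ZMod 2} {u v : V}
    (huv : u ≠ v) (h : omegaForm P (dashedOp u v) = 0) :
    qubitForm (P u) (0, 1) = qubitForm (P v) (0, 1) := by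
  simpa [dashedOp] using
    qubitForm_eq_of_omegaForm_eq_zero huv (fun w hwu hwv => by simp [dashedOp, hwu, hwv]) h

end Operators

lemma image_eq_univ_erase_zero {ι : Type*} [DecidableEq ι] {s : Finset ι}
    {f : ι → ZMod 2 × ZMod 2} (hs : s.card = 3) (hf : Set.InjOn f s) (hf0 : ∀ i ∈ s, f i ≠ 0) :
    s.image f = univ.erase 0 := by
  refine eq_of_subset_of_card_le (fun y hy => ?_) ?_
  · obtain ⟨i, hi, rfl⟩ := mem_image.1 hy
    exact mem_erase.2 ⟨hf0 i hi, mem_univ _⟩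
  · rw [card_image_of_injOn hf, hs]
    rfl

lemma even_card_filter_and_sum_filter {ι : Type*} [DecidableEq ι] {s : Finset ι}
    {f : ι → ZMod 2 × ZMod 2} (hs : s.card = 3) (hf : Set.InjOn f s) (hf0 : ∀ i ∈ s, f i ≠ 0)
    (x : ZMod 2 × ZMod 2) :
    Even (s.filter (fun i => qubitForm x (f i) = 1)).card ∧
      ∑ i ∈ s.filter (fun i => qubitForm x (f i) = 1), f i = x := by
  have himage : (s.filter (fun i => qubitForm x (f i) = 1)).image f
      = (univ.erase 0).filter (qubitForm x · = 1) := by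
    rw [← image_eq_univ_erase_zero hs hf hf0, filter_image]
  have hinj : Set.InjOn f (s.filter (fun i => qubitForm x (f i) = 1)) :=
    hf.mono (filter_subset _ _)
  constructor
  · rw [← card_image_of_injOn hinj, himage]
    exact even_card_filter_qubitForm_eq_one x
  · have hsum := sum_filter_qubitForm_eq_one x
    rwa [← himage, sum_image hinj] at hsum

theorem stmt8_general {V : Type*} [Fintype V] [DecidableEq V]
    (E : Finset (Finset V))
    (hcard : ∀ e ∈ E, e.card = 2 ∨ e.card = 3)
    (hreg : ∀ v : V, (E.filter (fun e => v ∈ e)).card = 3)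
    (hint : ∀ e ∈ E, ∀ e' ∈ E, e ≠ e' → (e ∩ e').card ≤ 1)
    (K : Finset V → V → ZMod 2 × ZMod 2)
    (hsupp : ∀ e ∈ E, ∀ u : V, K e u ≠ 0 ↔ u ∈ e)
    (hKcomm : ∀ e ∈ E, ∀ e' ∈ E, e ≠ e' →
      omegaForm (K e) (K e') = if (e ∩ e').card = 1 then 1 else 0)
    (hZ : ∀ t ∈ E, t.card = 3 → ∀ u ∈ t, K t u = ((0 : ZMod 2), (1 : ZMod 2)))
    (P : V → ZMod 2 × ZMod 2)
    (hPsolid : ∀ e ∈ E, e.card = 2 → omegaForm P (K e) = 0)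
    (hPdashed : ∀ t ∈ E, t.card = 3 → ∀ u ∈ t, ∀ v ∈ t, u ≠ v →
      omegaForm P (dashedOp u v) = 0) :
    ∃ M ⊆ E, (∀ v : V, Even ((M.filter (fun e => v ∈ e)).card)) ∧
      P = ∑ e ∈ M, K e := by
  have hKzero : ∀ e ∈ E, ∀ u ∉ e, K e u = 0 := fun e he u hu =>
    not_not.1 (mt (hsupp e he u).1 hu)
  have hconst : ∀ e ∈ E, ∀ u ∈ e, ∀ v ∈ e,
      qubitForm (P u) (K e u) = qubitForm (P v) (K e v) := by
    intro e he u hu v hv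
    rcases hcard e he with hlink | htriangle
    · exact qubitForm_eq_of_mem_link hlink (hKzero e he) (hPsolid e he hlink) hu hv
    · obtain rfl | huv := eq_or_ne u v
      · rfl
      rw [hZ e he htriangle u hu, hZ e he htriangle v hv]
      exact qubitForm_eq_of_omegaForm_dashedOp_eq_zero huv
        (hPdashed e he htriangle u hu v hv huv)
  set M := E.filter fun e => ∃ u ∈ e, qubitForm (P u) (K e u) = 1
  have hMv : ∀ v, M.filter (fun e => v ∈ e)
      = (E.filter (fun e => v ∈ e)).filter (fun e => qubitForm (P v) (K e v) = 1) := by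
    intro v
    ext e
    simp only [M, mem_filter]
    refine ⟨fun ⟨⟨he, u, hu, h⟩, hv⟩ => ⟨⟨he, hv⟩, hconst e he v hv u hu ▸ h⟩,
      fun ⟨⟨he, hv⟩, h⟩ => ⟨⟨he, v, hv, h⟩, hv⟩⟩
  have hvertex v := even_card_filter_and_sum_filter (hreg v)
    (injOn_apply_of_omegaForm_edges hint hKzero hKcomm v)
    (fun e he => (hsupp e (mem_filter.1 he).1 v).2 (mem_filter.1 he).2) (P v)
  refine ⟨M, filter_subset _ _, fun v => hMv v ▸ (hvertex v).1, funext fun v => ?_⟩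
  rw [Finset.sum_apply,
    ← sum_filter_of_ne fun e he hne => (hsupp e (mem_filter.1 he).1 v).1 hne, hMv]
  exact (hvertex v).2.symm

/-- Let `(V, E)` be a finite 3-valent hypergraph (edges of size 2 or 3, every
vertex in exactly three edges, distinct edges share at most one vertex, distinct
triangles disjoint) equipped with edge operators `K` (supported exactly on their
edge, two distinct edge operators anticommuting iff their edges share exactly one
vertex) whose triangle operators are of `Z`-type: `K t u = (0,1)` for every
triangle `t` and `u ∈ t`.  If a Pauli vector `P ∈ (F₂ × F₂)^V` commutes with every
solid link operator `K e` (`e` a link of `E`) and with every dashed link operator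
(the restriction of a triangle operator to two of its vertices), then `P` is the
loop operator `W(M) = ∑_{e ∈ M} K e` of some cycle `M ⊆ E`: the centralizer of the
gauge group generated by the two-qubit link operators is contained in (hence,
with the converse inclusion, equal to) the group of loop operators. -/
theorem stmt8 {V : Type*} [Fintype V] [DecidableEq V]
    (E : Finset (Finset V))
    (hcard : ∀ e ∈ E, e.card = 2 ∨ e.card = 3)
    (hreg : ∀ v : V, (E.filter (fun e => v ∈ e)).card = 3)
    (hint : ∀ e ∈ E, ∀ e' ∈ E, e ≠ e' → (e ∩ e').card ≤ 1)
    (htri : ∀ e ∈ E, ∀ e' ∈ E, e ≠ e' → e.card = 3 → e'.card = 3 → e ∩ e' = ∅)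
    (K : Finset V → V → ZMod 2 × ZMod 2)
    (hsupp : ∀ e ∈ E, ∀ u : V, K e u ≠ 0 ↔ u ∈ e)
    (hKcomm : ∀ e ∈ E, ∀ e' ∈ E, e ≠ e' →
      omegaForm (K e) (K e') = if (e ∩ e').card = 1 then 1 else 0)
    (hZ : ∀ t ∈ E, t.card = 3 → ∀ u ∈ t, K t u = ((0 : ZMod 2), (1 : ZMod 2)))
    (P : V → ZMod 2 × ZMod 2)
    (hPsolid : ∀ e ∈ E, e.card = 2 → omegaForm P (K e) = 0)
    (hPdashed : ∀ t ∈ E, t.card = 3 → ∀ u ∈ t, ∀ v ∈ t, u ≠ v →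
      omegaForm P (dashedOp u v) = 0) :
    ∃ M ⊆ E, (∀ v : V, Even ((M.filter (fun e => v ∈ e)).card)) ∧
      P = ∑ e ∈ M, K e :=
  stmt8_general E hcard hreg hint K hsupp hKcomm hZ P hPsolid hPdashed
end

section
/- Let K_1, …, K_m be N×N complex matrices with K_j² = I for every j, and suppose that for every j ∈ {2,…,m} the matrix K_j commutes with the product K_{j-1}⋯K_2K_1. Let γ_1, …, γ_m ∈ {+1,−1}, set Π_j = (I + γ_j K_j)/2 and S = K_m K_{m-1}⋯K_1. Then S·(Π_m Π_{m-1}⋯Π_1) = (γ_1 γ_2⋯γ_m)·(Π_m Π_{m-1}⋯Π_1). (Measuring the eigenvalues of K_1, …, K_m in this order, with outcomes γ_1, …, γ_m, leaves the system in an eigenvector of S with eigenvalue γ_1⋯γ_m; thus a stabilizer admitting such an ordered decomposition into gauge generators can be measured by measuring the generators.) -/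
/-!
Induction on `m`. With `S = K_{m-1}⋯K_1` and `P = Π_{m-1}⋯Π_1`, suppose `S P = c P`. Since `K_m`
commutes with `S`, so does `Π_m`, whence `K_m S Π_m P = K_m Π_m S P = (γ_m Π_m)(c P)`; here
`K_m Π_m = γ_m Π_m` because `K_m² = 1` and `γ_m² = 1`.
-/

variable {𝕜 R : Type*} [Field 𝕜] [Ring R] [Algebra 𝕜 R]

def eigenProjector (γ : 𝕜) (A : R) : R := (2⁻¹ : 𝕜) • (1 + γ • A)

theorem mul_eigenProjector_self {A : R} (hA : A * A = 1) {γ : 𝕜} (hγ : γ * γ = 1) :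
    A * eigenProjector γ A = γ • eigenProjector γ A := by
  rw [eigenProjector, mul_smul_comm, smul_comm γ]
  congr 1
  rw [mul_add, mul_one, mul_smul_comm, hA, smul_add, smul_smul, hγ, one_smul, add_comm]

theorem Commute.eigenProjector_right {S A : R} (h : Commute S A) (γ : 𝕜) :
    Commute S (eigenProjector γ A) :=
  ((Commute.one_right S).add_right (h.smul_right γ)).smul_right _

theorem mul_mul_mul_eq_smul_of_commute {S P Q A : R} {c γ : 𝕜} (hSP : S * P = c • P)
    (hSQ : Commute S Q) (hAQ : A * Q = γ • Q) :
    A * S * (Q * P) = (c * γ) • (Q * P) := by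
  calc A * S * (Q * P) = A * Q * (S * P) := by
        rw [mul_assoc, ← mul_assoc S, hSQ.eq, mul_assoc, mul_assoc]
    _ = (c * γ) • (Q * P) := by rw [hAQ, hSP, smul_mul_smul_comm, mul_comm]

theorem prod_mul_prod_eigenProjector {m : ℕ} (K : ℕ → R)
    (hsq : ∀ j, 1 ≤ j → j ≤ m → K j ^ 2 = 1)
    (hcomm : ∀ j, 2 ≤ j → j ≤ m →
      Commute (K j) (((List.range (j - 1)).map (fun i => K (i + 1))).reverse.prod))
    (γ : ℕ → 𝕜) (hγ : ∀ j, 1 ≤ j → j ≤ m → γ j = 1 ∨ γ j = -1) :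
    (((List.range m).map (fun i => K (i + 1))).reverse.prod) *
        (((List.range m).map (fun i => eigenProjector (γ (i + 1)) (K (i + 1)))).reverse.prod) =
      (∏ i ∈ Finset.range m, γ (i + 1)) •
        (((List.range m).map (fun i => eigenProjector (γ (i + 1)) (K (i + 1)))).reverse.prod) := by
  induction m with
  | zero => simp
  | succ n ih =>
    have hSP := ih (fun j h1 h2 => hsq j h1 (by omega)) (fun j h1 h2 => hcomm j h1 (by omega))
      (fun j h1 h2 => hγ j h1 (by omega))
    have hK : K (n + 1) * K (n + 1) = 1 := by rw [← sq]; exact hsq (n + 1) (by omega) le_rfl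
    have hγsq : γ (n + 1) * γ (n + 1) = 1 := by
      rcases hγ (n + 1) (by omega) le_rfl with h | h <;> simp [h]
    have hSK : Commute (((List.range n).map (fun i => K (i + 1))).reverse.prod) (K (n + 1)) := by
      rcases Nat.eq_zero_or_pos n with rfl | hn
      · simp
      · simpa using (hcomm (n + 1) (by omega) le_rfl).symm
    simp only [List.range_succ, List.map_append, List.reverse_append, List.map_cons,
      List.map_nil, List.reverse_cons, List.reverse_nil, List.nil_append, List.prod_cons,
      List.cons_append, Finset.prod_range_succ]
    exact mul_mul_mul_eq_smul_of_commute hSP (hSK.eigenProjector_right _)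
      (mul_eigenProjector_self hK hγsq)

/-- Let `K_1, …, K_m` be `N×N` complex matrices squaring to the identity, such
that each `K_j` (`2 ≤ j ≤ m`) commutes with the product `K_{j-1}⋯K_2K_1`.  Let
`γ_1, …, γ_m ∈ {+1,−1}`, let `Π_j = (I + γ_j K_j)/2` and `S = K_m⋯K_1`.  Then
`S · (Π_m⋯Π_1) = (γ_1⋯γ_m) · (Π_m⋯Π_1)`: measuring the eigenvalues of
`K_1, …, K_m` in this order with outcomes `γ_1, …, γ_m` leaves the system in an
eigenvector of `S` with eigenvalue `γ_1⋯γ_m`. -/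
theorem stmt11 {N m : ℕ} (K : ℕ → Matrix (Fin N) (Fin N) ℂ)
    (hsq : ∀ j, 1 ≤ j → j ≤ m → K j ^ 2 = 1)
    (hcomm : ∀ j, 2 ≤ j → j ≤ m →
      Commute (K j) (((List.range (j - 1)).map (fun i => K (i + 1))).reverse.prod))
    (γ : ℕ → ℂ) (hγ : ∀ j, 1 ≤ j → j ≤ m → γ j = 1 ∨ γ j = -1) :
    (((List.range m).map (fun i => K (i + 1))).reverse.prod) *
        (((List.range m).map
          (fun i => (2⁻¹ : ℂ) • (1 + γ (i + 1) • K (i + 1)))).reverse.prod) =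
      (∏ i ∈ Finset.range m, γ (i + 1)) •
        (((List.range m).map
          (fun i => (2⁻¹ : ℂ) • (1 + γ (i + 1) • K (i + 1)))).reverse.prod) :=
  prod_mul_prod_eigenProjector K hsq hcomm γ hγ
end

section
/- Let m ≥ 3 be odd and let K_1, …, K_m be invertible N×N complex matrices such that K_i K_j = −K_j K_i whenever i and j are cyclically adjacent in ℤ/m (i.e. i − j ≡ ±1 mod m) and K_i K_j = K_j K_i otherwise. Then there is no permutation π of {1,…,m} such that for every j ∈ {2,…,m} the matrix K_{π(j)} commutes with the product K_{π(j-1)}⋯K_{π(2)}K_{π(1)}. (The link operators around a loop of odd length admit no ordering satisfying the measurement condition, so the corresponding loop operator cannot be measured by two-qubit measurements.) -/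
private lemma sign_lemma13 {N m : ℕ} (K : ZMod m → Matrix (Fin N) (Fin N) ℂ)
    (k : ZMod m) :
    ∀ L : List (ZMod m),
      (∀ i ∈ L, K k * K i =
        (if (k = i + 1 ∨ i = k + 1) then (-1 : ℂ) else 1) • (K i * K k)) →
      K k * (L.map K).prod =
        ((-1 : ℂ) ^ (L.countP (fun i => decide (k = i + 1 ∨ i = k + 1)))) •
          ((L.map K).prod * K k) := by
  intro L
  induction L with
  | nil => intro _; simp
  | cons a t ih =>
    intro h
    have ha := h a (by simp)
    have ht := ih (fun i hi => h i (by simp [hi]))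
    simp only [List.map_cons, List.prod_cons, List.countP_cons]
    rw [← mul_assoc, ha, smul_mul_assoc, mul_assoc, ht, mul_smul_comm, smul_smul,
      ← mul_assoc]
    congr 1
    rw [pow_add]
    by_cases hc : (k = a + 1 ∨ a = k + 1) <;> simp [hc, mul_comm]


/-- Let `m ≥ 3` be odd and let `K_i`, `i ∈ ℤ/m`, be invertible `N×N` complex
matrices (with `N ≥ 1`) such that `K_i` and `K_j` anticommute whenever `i` and
`j` are cyclically adjacent (`i − j ≡ ±1 mod m`) and commute otherwise.  Then
there is no ordering `π(0), π(1), …, π(m-1)` of `ℤ/m` such that for every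
`1 ≤ j < m` the matrix `K_{π(j)}` commutes with the product
`K_{π(j-1)}⋯K_{π(1)}K_{π(0)}`: the link operators around a loop of odd length
admit no ordering satisfying the measurement condition, so the corresponding
loop operator cannot be measured by two-qubit measurements. -/
theorem stmt13 {N : ℕ} (hN : 0 < N) {m : ℕ} (hm3 : 3 ≤ m) (hodd : Odd m)
    (K : ZMod m → Matrix (Fin N) (Fin N) ℂ)
    (hinv : ∀ i : ZMod m, IsUnit (K i))
    (hanti : ∀ i j : ZMod m, (i = j + 1 ∨ j = i + 1) →
      K i * K j = -(K j * K i))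
    (hcomm : ∀ i j : ZMod m, i ≠ j → ¬(i = j + 1 ∨ j = i + 1) →
      Commute (K i) (K j)) :
    ¬ ∃ π : ℕ → ZMod m, Set.BijOn π (Set.Iio m) Set.univ ∧
      ∀ j, 1 ≤ j → j < m → Commute (K (π j))
        (((List.range j).map (fun i => K (π i))).reverse.prod) := by
  rintro ⟨π, hbij, hmeas⟩
  haveI : Nonempty (Fin N) := ⟨⟨0, hN⟩⟩
  -- basic ZMod facts
  have hdvd : ∀ n : ℕ, (n : ZMod m) = 0 → m ∣ n := fun n h =>
    (ZMod.natCast_eq_zero_iff n m).mp h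
  have h10 : (1 : ZMod m) ≠ 0 := by
    intro h
    have := Nat.le_of_dvd one_pos (hdvd 1 (by exact_mod_cast h))
    omega
  have h20 : (2 : ZMod m) ≠ 0 := by
    intro h
    have := Nat.le_of_dvd two_pos (hdvd 2 (by exact_mod_cast h))
    omega
  -- the symmetric adjacency predicate on positions
  set p : ℕ → ℕ → Prop := fun i j => π j = π i + 1 ∨ π i = π j + 1 with hp
  have hpsymm : ∀ i j, p i j ↔ p j i := fun i j => or_comm
  have hpirr : ∀ i, ¬ p i i := by
    intro i hcon
    rcases hcon with h | h <;> exact h10 (left_eq_add.mp h)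
  -- Step A: each count is even
  have evenA : ∀ j, 1 ≤ j → j < m →
      Even ((Finset.range j).filter (fun i => p i j)).card := by
    intro j hj1 hjm
    set k := π j with hk
    set L : List (ZMod m) := ((List.range j).map π).reverse with hL
    have hmemL : ∀ v ∈ L, ∃ i, i < j ∧ π i = v := by
      intro v hv
      rw [hL, List.mem_reverse, List.mem_map] at hv
      rcases hv with ⟨i, hi, hiv⟩
      exact ⟨i, List.mem_range.mp hi, hiv⟩
    have hswap : ∀ v ∈ L, K k * K v =
        (if (k = v + 1 ∨ v = k + 1) then (-1 : ℂ) else 1) • (K v * K k) := by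
      intro v hv
      rcases hmemL v hv with ⟨i, hij, rfl⟩
      have hne : k ≠ π i := by
        intro h
        have := hbij.injOn (Set.mem_Iio.mpr hjm) (Set.mem_Iio.mpr (lt_trans hij hjm)) h
        omega
      by_cases hadj : (k = π i + 1 ∨ π i = k + 1)
      · rw [if_pos hadj, hanti k (π i) hadj, neg_one_smul]
      · rw [if_neg hadj, one_smul, hcomm k (π i) hne hadj]
    have hsign := sign_lemma13 K k L hswap
    have hP : (L.map K).prod =
        ((List.range j).map (fun i => K (π i))).reverse.prod := by
      rw [hL, List.map_reverse, List.map_map]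
      rfl
    set c := L.countP (fun v => decide (k = v + 1 ∨ v = k + 1)) with hc
    set X := (L.map K).prod * K k with hX
    have hcom : K k * (L.map K).prod = (L.map K).prod * K k := by
      rw [hP]
      exact (hmeas j hj1 hjm).eq
    have hXunit : IsUnit X := by
      refine IsUnit.mul ?_ (hinv k)
      refine List.prod_isUnit ?_
      intro x hx
      rcases List.mem_map.mp hx with ⟨v, _, rfl⟩
      exact hinv v
    have hXne : X ≠ 0 := hXunit.ne_zero
    have heq : ((-1 : ℂ) ^ c) • X = X := by
      rw [← hsign, hcom]
    have hzero : ((-1 : ℂ) ^ c - 1) • X = 0 := by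
      rw [sub_smul, one_smul, heq, sub_self]
    have hone : (-1 : ℂ) ^ c = 1 := by
      rcases smul_eq_zero.mp hzero with h | h
      · exact sub_eq_zero.mp h
      · exact absurd h hXne
    have hceven : Even c :=
      (neg_one_pow_eq_one_iff_even (by norm_num : (-1 : ℂ) ≠ 1)).mp hone
    -- convert the list count to the finset card
    have hcount : c = ((Finset.range j).filter (fun i => p i j)).card := by
      rw [hc, hL, List.countP_reverse, List.countP_map,
        List.countP_eq_length_filter]
      rfl
    rwa [← hcount]
  -- Step B: counting
  set S := ∑ j ∈ Finset.range m, ((Finset.range j).filter (fun i => p i j)).card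
    with hS
  have hSeven : Even S := by
    refine Finset.even_sum _ ?_
    intro j hj
    rcases Nat.eq_zero_or_pos j with rfl | hj1
    · simp
    · exact evenA j hj1 (Finset.mem_range.mp hj)
  -- rewrite S as a double sum
  have hSd : S = ∑ j ∈ Finset.range m, ∑ i ∈ Finset.range m,
      (if i < j ∧ p i j then 1 else 0) := by
    rw [hS]
    refine Finset.sum_congr rfl ?_
    intro j hj
    have hjm := Finset.mem_range.mp hj
    have hfe : (Finset.range j).filter (fun i => p i j)
        = (Finset.range m).filter (fun i => i < j ∧ p i j) := by
      ext i
      simp only [Finset.mem_filter, Finset.mem_range]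
      constructor
      · rintro ⟨h1, h2⟩; exact ⟨lt_trans h1 hjm, h1, h2⟩
      · rintro ⟨_, h1, h2⟩; exact ⟨h1, h2⟩
    rw [hfe, Finset.card_filter]
  have hdouble : S + S = ∑ j ∈ Finset.range m, ∑ i ∈ Finset.range m,
      (if p i j then 1 else 0) := by
    have hS2 : S = ∑ j ∈ Finset.range m, ∑ i ∈ Finset.range m,
        (if j < i ∧ p i j then 1 else 0) := by
      rw [hSd, Finset.sum_comm]
      refine Finset.sum_congr rfl fun j _ => Finset.sum_congr rfl fun i _ => ?_
      simp only [hpsymm i j]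
    nth_rewrite 2 [hS2]
    rw [hSd, ← Finset.sum_add_distrib]
    refine Finset.sum_congr rfl fun j _ => ?_
    rw [← Finset.sum_add_distrib]
    refine Finset.sum_congr rfl fun i _ => ?_
    by_cases hij : i = j
    · subst hij
      simp [hpirr i]
    · by_cases hpij : p i j
      · rcases lt_or_gt_of_ne hij with h | h <;> simp [hpij, h] <;> omega
      · simp [hpij]
  -- each column has exactly two adjacent positions
  have hcard1 : ∀ a : ZMod m,
      ((Finset.range m).filter (fun i => π i = a)).card = 1 := by
    intro a
    rcases hbij.surjOn (Set.mem_univ a) with ⟨i₀, hi₀, hπi₀⟩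
    rw [Finset.card_eq_one]
    refine ⟨i₀, ?_⟩
    ext i
    simp only [Finset.mem_filter, Finset.mem_range, Finset.mem_singleton]
    constructor
    · rintro ⟨him, hia⟩
      exact hbij.injOn (Set.mem_Iio.mpr him) hi₀ (hia.trans hπi₀.symm)
    · rintro rfl
      exact ⟨Set.mem_Iio.mp hi₀, hπi₀⟩
  have hcol : ∀ j, ((Finset.range m).filter (fun i => p i j)).card = 2 := by
    intro j
    have hiff : ∀ i, p i j ↔ (π i = π j - 1 ∨ π i = π j + 1) := by
      intro i
      rw [hp]
      constructor
      · rintro (h | h)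
        · left; rw [eq_sub_iff_add_eq, ← h]
        · right; exact h
      · rintro (h | h)
        · left; rw [h]; ring
        · right; exact h
    have : (Finset.range m).filter (fun i => p i j)
        = ((Finset.range m).filter (fun i => π i = π j - 1))
          ∪ ((Finset.range m).filter (fun i => π i = π j + 1)) := by
      rw [← Finset.filter_or]
      exact Finset.filter_congr (fun i _ => by
        simp only [hiff i, decide_eq_true_eq])
    rw [this, Finset.card_union_of_disjoint, hcard1, hcard1]
    rw [Finset.disjoint_left]
    intro i hi1 hi2
    have h1 := (Finset.mem_filter.mp hi1).2
    have h2 := (Finset.mem_filter.mp hi2).2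
    apply h20
    have h4 : π j - 1 = π j + 1 := h1.symm.trans h2
    linear_combination -h4
  have hSm : S + S = 2 * m := by
    rw [hdouble]
    have : ∀ j ∈ Finset.range m,
        (∑ i ∈ Finset.range m, (if p i j then 1 else 0)) = 2 := by
      intro j _
      rw [← Finset.card_filter]
      exact hcol j
    rw [Finset.sum_congr rfl this, Finset.sum_const, Finset.card_range,
      smul_eq_mul, mul_comm]
  -- contradiction
  rcases hSeven with ⟨t, ht⟩
  rcases hodd with ⟨u, hu⟩
  omega
end
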